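/- arXiv:2002.04708 — 3 statements merged into one kernel-verified Lean document; each statement's English description precedes it below -/
import Mathlib

section
/- The function f(x) = artanh(1/(k₁·coth(u₁x) + k₂·coth(u₂x))) is concave on (0,∞): f''(x) ≤ 0 for all x > 0. -/
/-- The inverse hyperbolic tangent. -/
noncomputable def artanh (x : ℝ) : ℝ := Real.log ((1 + x) / (1 - x)) / 2

noncomputable def coth (x : ℝ) : ℝ := Real.cosh x / Real.sinh x

/-!
Write `g = k₁ coth (u₁ x) + k₂ coth (u₂ x) > 1`. Then `f = artanh (1 / g)` has
`f' = -g' / (g² - 1)` and `f'' = (2 g g'² - g'' (g² - 1)) / (g² - 1)²`. With `cᵢ = coth (uᵢ x)` and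
`sᵢ = cᵢ² - 1` one has `g' = -∑ kᵢuᵢsᵢ` and `g'' = 2 ∑ kᵢuᵢ²cᵢsᵢ`, and the numerator of `f''` is
nonpositive by Cauchy–Schwarz twice: `(∑ kᵢuᵢsᵢ)² ≤ (∑ kᵢuᵢ²cᵢsᵢ) (∑ kᵢsᵢ/cᵢ)`, and
`g ∑ kᵢsᵢ/cᵢ = g² - (∑ kᵢcᵢ) (∑ kᵢ/cᵢ) ≤ g² - (k₁ + k₂)² ≤ g² - 1`.
-/

open Filter

lemma one_lt_coth {x : ℝ} (hx : 0 < x) : 1 < coth x := by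
  have hs : 0 < Real.sinh x := Real.sinh_pos_iff.mpr hx
  rw [coth, one_lt_div hs]
  nlinarith [Real.cosh_sub_sinh x, Real.exp_pos (-x)]

lemma hasDerivAt_coth {x : ℝ} (hx : x ≠ 0) : HasDerivAt coth (1 - coth x ^ 2) x := by
  refine ((Real.hasDerivAt_cosh x).div (Real.hasDerivAt_sinh x)
    (Real.sinh_ne_zero.mpr hx)).congr_deriv ?_
  rw [coth]
  field_simp

lemma hasDerivAt_coth_const_mul {u x : ℝ} (h : u * x ≠ 0) :
    HasDerivAt (fun y => coth (u * y)) (u * (1 - coth (u * x) ^ 2)) x := by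
  have := (hasDerivAt_coth h).comp x ((hasDerivAt_id' x).const_mul u)
  rwa [mul_one, mul_comm] at this

lemma hasDerivAt_deriv_coth_const_mul {u x : ℝ} (h : u * x ≠ 0) :
    HasDerivAt (fun y => u * (1 - coth (u * y) ^ 2))
      (2 * u ^ 2 * coth (u * x) * (coth (u * x) ^ 2 - 1)) x := by
  refine ((((hasDerivAt_coth_const_mul h).pow 2).const_sub 1).const_mul u).congr_deriv ?_
  ring

lemma hasDerivAt_artanh {y : ℝ} (hy : |y| < 1) : HasDerivAt artanh (1 / (1 - y ^ 2)) y := by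
  obtain ⟨hy₁, hy₂⟩ := abs_lt.mp hy
  have hp : 1 + y ≠ 0 := by linarith
  have hm : 1 - y ≠ 0 := by linarith
  have hsq : 1 - y ^ 2 ≠ 0 := by nlinarith
  have hq : HasDerivAt (fun z => (1 + z) / (1 - z)) ((1 * (1 - y) - (1 + y) * -1) / (1 - y) ^ 2) y :=
    ((hasDerivAt_id' y).const_add 1).div ((hasDerivAt_id' y).const_sub 1) hm
  refine ((hq.log (div_ne_zero hp hm)).div_const 2).congr_deriv ?_
  field_simp
  ring

lemma hasDerivAt_artanh_one_div_comp {g : ℝ → ℝ} {g' x : ℝ} (hg : HasDerivAt g g' x)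
    (h : 1 < |g x|) :
    HasDerivAt (fun y => artanh (1 / g y)) (-g' / (g x ^ 2 - 1)) x := by
  have hg0 : g x ≠ 0 := abs_pos.mp (by linarith)
  have hinv : |1 / g x| < 1 := by
    rw [abs_div, abs_one]; exact (div_lt_one (by linarith)).mpr h
  have hsq : g x ^ 2 - 1 ≠ 0 := by nlinarith [sq_abs (g x)]
  refine ((hasDerivAt_artanh hinv).comp x ((hasDerivAt_const x 1).div hg hg0)).congr_deriv ?_
  field_simp
  ring

lemma hasDerivAt_deriv_artanh_one_div_comp {s : Set ℝ} {g g' g'' : ℝ → ℝ} (hs : IsOpen s)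
    (hg : ∀ x ∈ s, HasDerivAt g (g' x) x) (hg' : ∀ x ∈ s, HasDerivAt g' (g'' x) x)
    (h : ∀ x ∈ s, 1 < |g x|) {x : ℝ} (hx : x ∈ s) :
    HasDerivAt (deriv fun y => artanh (1 / g y))
      ((2 * g x * g' x ^ 2 - g'' x * (g x ^ 2 - 1)) / (g x ^ 2 - 1) ^ 2) x := by
  have hderiv : (deriv fun y => artanh (1 / g y)) =ᶠ[nhds x] fun y => -g' y / (g y ^ 2 - 1) :=
    eventually_of_mem (hs.mem_nhds hx) fun y hy =>
      (hasDerivAt_artanh_one_div_comp (hg y hy) (h y hy)).deriv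
  have hsq : g x ^ 2 - 1 ≠ 0 := by nlinarith [sq_abs (g x), h x hx]
  have hquot : HasDerivAt (fun y => -g' y / (g y ^ 2 - 1))
      ((-g'' x * (g x ^ 2 - 1) - -g' x * (2 * g x ^ 1 * g' x)) / (g x ^ 2 - 1) ^ 2) x :=
    (hg' x hx).neg.div (((hg x hx).pow 2).sub_const 1) hsq
  refine (hquot.congr_of_eventuallyEq hderiv).congr_deriv ?_
  ring

lemma concaveOn_artanh_one_div_comp {s : Set ℝ} {g g' g'' : ℝ → ℝ} (hs : IsOpen s)
    (hconv : Convex ℝ s) (hg : ∀ x ∈ s, HasDerivAt g (g' x) x)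
    (hg' : ∀ x ∈ s, HasDerivAt g' (g'' x) x) (h : ∀ x ∈ s, 1 < |g x|)
    (hineq : ∀ x ∈ s, 2 * g x * g' x ^ 2 ≤ g'' x * (g x ^ 2 - 1)) :
    ConcaveOn ℝ s (fun x => artanh (1 / g x)) ∧
      ∀ x ∈ s, deriv (deriv fun x => artanh (1 / g x)) x ≤ 0 := by
  set F := fun x => (2 * g x * g' x ^ 2 - g'' x * (g x ^ 2 - 1)) / (g x ^ 2 - 1) ^ 2
  have hf' x (hx : x ∈ s) := hasDerivAt_artanh_one_div_comp (hg x hx) (h x hx)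
  have hf'' x (hx : x ∈ s) : HasDerivAt (deriv fun y => artanh (1 / g y)) (F x) x :=
    hasDerivAt_deriv_artanh_one_div_comp hs hg hg' h hx
  have hF x (hx : x ∈ s) : F x ≤ 0 :=
    div_nonpos_of_nonpos_of_nonneg (by linarith [hineq x hx]) (sq_nonneg _)
  refine ⟨concaveOn_of_hasDerivWithinAt2_nonpos hconv (f' := deriv fun y => artanh (1 / g y))
    (fun x hx => (hf' x hx).continuousAt.continuousWithinAt) ?_ ?_ (hs.interior_eq ▸ hF),
    fun x hx => (hf'' x hx).deriv ▸ hF x hx⟩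
  all_goals rw [hs.interior_eq]
  · exact fun x hx => (hf' x hx).differentiableAt.hasDerivAt.hasDerivWithinAt
  · exact fun x hx => (hf'' x hx).hasDerivWithinAt

-- The inequality `2 g g'² ≤ g'' (g² - 1)` for `g = k₁ coth (u₁ x) + k₂ coth (u₂ x)`,
-- written in terms of `cᵢ = coth (uᵢ x)`.
lemma coth_sum_concavity_ineq {k₁ k₂ u₁ u₂ c₁ c₂ : ℝ} (hk₁ : 0 < k₁) (hk₂ : 0 < k₂)
    (hk : 1 ≤ k₁ + k₂) (hc₁ : 1 < c₁) (hc₂ : 1 < c₂) :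
    2 * (k₁ * c₁ + k₂ * c₂) * (k₁ * (u₁ * (1 - c₁ ^ 2)) + k₂ * (u₂ * (1 - c₂ ^ 2))) ^ 2
      ≤ (k₁ * (2 * u₁ ^ 2 * c₁ * (c₁ ^ 2 - 1)) + k₂ * (2 * u₂ ^ 2 * c₂ * (c₂ ^ 2 - 1)))
        * ((k₁ * c₁ + k₂ * c₂) ^ 2 - 1) := by
  set s₁ := c₁ ^ 2 - 1
  set s₂ := c₂ ^ 2 - 1
  set g := k₁ * c₁ + k₂ * c₂
  set A := k₁ * u₁ * s₁ + k₂ * u₂ * s₂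
  set B := k₁ * u₁ ^ 2 * c₁ * s₁ + k₂ * u₂ ^ 2 * c₂ * s₂
  set T := k₁ * s₁ * c₂ + k₂ * s₂ * c₁
  have hs₁ : 0 < s₁ := by nlinarith
  have hs₂ : 0 < s₂ := by nlinarith
  have hc : 0 < c₁ * c₂ := by nlinarith
  have hB : 0 ≤ B := by positivity
  -- Cauchy–Schwarz: `(∑ kᵢuᵢsᵢ)² ≤ (∑ kᵢuᵢ²cᵢsᵢ) (∑ kᵢsᵢ/cᵢ)`.
  have hA : A ^ 2 * (c₁ * c₂) ≤ B * T := by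
    have : 0 ≤ k₁ * k₂ * s₁ * s₂ * (u₁ * c₁ - u₂ * c₂) ^ 2 := by positivity
    linear_combination this
  have hT : g * T ≤ (g ^ 2 - 1) * (c₁ * c₂) := by
    have : 0 ≤ c₁ * c₂ * ((k₁ + k₂) ^ 2 - 1) + k₁ * k₂ * (c₁ - c₂) ^ 2 := by
      have : 1 ≤ (k₁ + k₂) ^ 2 := by nlinarith
      nlinarith [sq_nonneg (c₁ - c₂), mul_pos hk₁ hk₂]
    linear_combination this
  have : g * A ^ 2 * (c₁ * c₂) ≤ B * (g ^ 2 - 1) * (c₁ * c₂) := by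
    linear_combination (mul_le_mul_of_nonneg_left hA (by positivity : (0 : ℝ) ≤ g))
      + mul_le_mul_of_nonneg_left hT hB
  linear_combination 2 * le_of_mul_le_mul_right this hc

theorem stmt_0 (k₁ k₂ u₁ u₂ : ℝ) (hk₁ : 0 < k₁) (hk₂ : 0 < k₂)
    (hk : 1 ≤ k₁ + k₂) (hu₁ : 0 < u₁) (hu₂ : 0 < u₂) :
    ConcaveOn ℝ (Set.Ioi 0)
      (fun x => artanh (1 / (k₁ * coth (u₁ * x) + k₂ * coth (u₂ * x)))) ∧
    ∀ x > (0 : ℝ),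
      deriv (deriv (fun x => artanh (1 / (k₁ * coth (u₁ * x) + k₂ * coth (u₂ * x))))) x ≤ 0 := by
  have hc₁ {x : ℝ} (hx : 0 < x) := one_lt_coth (mul_pos hu₁ hx)
  have hc₂ {x : ℝ} (hx : 0 < x) := one_lt_coth (mul_pos hu₂ hx)
  refine concaveOn_artanh_one_div_comp isOpen_Ioi (convex_Ioi 0)
    (g' := fun x => k₁ * (u₁ * (1 - coth (u₁ * x) ^ 2)) + k₂ * (u₂ * (1 - coth (u₂ * x) ^ 2)))
    (g'' := fun x => k₁ * (2 * u₁ ^ 2 * coth (u₁ * x) * (coth (u₁ * x) ^ 2 - 1))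
      + k₂ * (2 * u₂ ^ 2 * coth (u₂ * x) * (coth (u₂ * x) ^ 2 - 1)))
    (fun x hx => ?_) (fun x hx => ?_) (fun x hx => ?_) (fun x hx => ?_)
  · exact ((hasDerivAt_coth_const_mul (mul_pos hu₁ hx).ne').const_mul k₁).add
      ((hasDerivAt_coth_const_mul (mul_pos hu₂ hx).ne').const_mul k₂)
  · exact ((hasDerivAt_deriv_coth_const_mul (mul_pos hu₁ hx).ne').const_mul k₁).add
      ((hasDerivAt_deriv_coth_const_mul (mul_pos hu₂ hx).ne').const_mul k₂)
  · exact lt_abs.mpr (Or.inl (by nlinarith [hc₁ hx, hc₂ hx]))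
  · exact coth_sum_concavity_ineq hk₁ hk₂ hk (hc₁ hx) (hc₂ hx)
end

section
/- The function α ↦ α²·(1 + cot(kα)²) is (weakly) increasing on the interval of α > 0 with kα ∈ (0, π/2], for any fixed k > 0. -/
/-!
Since `1 + cot² = 1 / sin²`, the function equals `(kα / sin kα)² / k²`, and `x / sin x` increases
on `(0, π)` because `sin x / x` is the slope of a secant of the concave function `sin` through
the origin.
-/

open Real Set

lemma Real.one_add_cot_sq {x : ℝ} (hx : sin x ≠ 0) : 1 + cot x ^ 2 = (sin x ^ 2)⁻¹ := by
  rw [cot_eq_cos_div_sin, div_pow]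
  field_simp
  exact sin_sq_add_cos_sq x

lemma Real.antitoneOn_sin_div_self : AntitoneOn (fun x => sin x / x) (Ioc 0 π) := by
  have hslope := strictConcaveOn_sin_Icc.concaveOn.antitoneOn_slope_gt
    (left_mem_Icc.mpr pi_pos.le)
  have hset : {y ∈ Icc 0 π | 0 < y} = Ioc 0 π :=
    Set.ext fun _ => ⟨fun ⟨⟨_, hle⟩, hpos⟩ => ⟨hpos, hle⟩, fun ⟨hpos, hle⟩ => ⟨⟨hpos.le, hle⟩, hpos⟩⟩
  rw [hset, slope_fun_def_field] at hslope
  simpa only [sin_zero, sub_zero] using hslope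

lemma Real.monotoneOn_self_div_sin : MonotoneOn (fun x => x / sin x) (Ioo 0 π) := by
  intro a ha b hb hab
  have hsin_div_pos : 0 < sin b / b := div_pos (sin_pos_of_pos_of_lt_pi hb.1 hb.2) hb.1
  have hanti := antitoneOn_sin_div_self (Ioo_subset_Ioc_self ha) (Ioo_subset_Ioc_self hb) hab
  simpa only [inv_div] using inv_anti₀ hsin_div_pos hanti

theorem stmt_8 (k : ℝ) (hk : 0 < k) :
    MonotoneOn (fun α => α ^ 2 * (1 + Real.cot (k * α) ^ 2))
      (Set.Ioc 0 (Real.pi / (2 * k))) := by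
  have hmaps : MapsTo (k * ·) (Ioc 0 (π / (2 * k))) (Ioo 0 π) := by
    rintro α ⟨hα, hαle⟩
    rw [le_div_iff₀ (by positivity)] at hαle
    exact ⟨mul_pos hk hα, by nlinarith [pi_pos]⟩
  have hrewrite : EqOn (fun α => (k * α / sin (k * α)) ^ 2 / k ^ 2)
      (fun α => α ^ 2 * (1 + cot (k * α) ^ 2)) (Ioc 0 (π / (2 * k))) := by
    intro α hα
    have hsin := (sin_pos_of_pos_of_lt_pi (hmaps hα).1 (hmaps hα).2).ne'
    simp only [one_add_cot_sq hsin]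
    field_simp
  refine MonotoneOn.congr ?_ hrewrite
  intro a ha b hb hab
  have hdiv := monotoneOn_self_div_sin (hmaps ha) (hmaps hb) (mul_le_mul_of_nonneg_left hab hk.le)
  have hnonneg : 0 ≤ k * a / sin (k * a) :=
    (div_pos (hmaps ha).1 (sin_pos_of_pos_of_lt_pi (hmaps ha).1 (hmaps ha).2)).le
  dsimp only
  gcongr
end

section
/- Let γ be a hyperbolic geodesic in the Poincaré disk 𝔻 not passing through 0, and let H be the closed hyperbolic half-plane bounded by γ containing 0. Then for any k ∈ (0,1), the radial hyperbolic contraction δ^h_{0,k}(H) = { tanh(k·artanh(r))·e^{iθ} : r·e^{iθ} ∈ H } is not hyperbolically convex. -/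
/-- Hyperbolic distance in the Poincaré disk. -/
noncomputable def hdist (u v : ℂ) : ℝ :=
  2 * artanh (‖(u - v) / (1 - (starRingEnd ℂ) v * u)‖)

/-- A set in the unit disk is hyperbolically convex if, together with any two of its
points, it contains every point of the disk lying on the hyperbolic geodesic segment
between them (characterized metrically). -/
def hConvex (C : Set ℂ) : Prop :=
  ∀ u ∈ C, ∀ v ∈ C, ∀ z : ℂ, ‖z‖ < 1 →
    hdist u z + hdist z v = hdist u v → z ∈ C

/-- Radial hyperbolic dilation about 0 with factor k. -/
noncomputable def hDil (k : ℝ) (z : ℂ) : ℂ :=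
  (Real.tanh (k * artanh ‖z‖) / ‖z‖ : ℝ) • z

open Set ComplexConjugate

lemma artanh_eq_real_artanh {x : ℝ} (hx : x ∈ Icc (-1) 1) : artanh x = Real.artanh x := by
  rw [artanh, Real.artanh_eq_half_log hx]
  ring

/-- Valid for every real `x`: at `x = ±1` both sides vanish by the conventions of `Real.log`. -/
lemma two_mul_artanh (x : ℝ) : 2 * artanh x = artanh (2 * x / (1 + x ^ 2)) := by
  have h : (0 : ℝ) < 1 + x ^ 2 := by positivity
  have hplus : 1 + 2 * x / (1 + x ^ 2) = (1 + x) ^ 2 / (1 + x ^ 2) := by field_simp; ring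
  have hminus : 1 - 2 * x / (1 + x ^ 2) = (1 - x) ^ 2 / (1 + x ^ 2) := by field_simp; ring
  have hquot : (1 + 2 * x / (1 + x ^ 2)) / (1 - 2 * x / (1 + x ^ 2)) = ((1 + x) / (1 - x)) ^ 2 := by
    rw [hplus, hminus, div_div_div_cancel_right₀ h.ne', div_pow]
  rw [artanh, artanh, hquot, Real.log_pow]
  push_cast
  ring

lemma Real.tanh_strictMono : StrictMono Real.tanh := by
  intro x y hxy
  by_contra! h
  have := Real.artanh_le_artanh (Real.neg_one_lt_tanh y) (Real.tanh_lt_one x) h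
  rw [Real.artanh_tanh, Real.artanh_tanh] at this
  exact this.not_gt hxy

lemma tanh_mul_artanh_le {k x y : ℝ} (hk : 0 ≤ k) (hx : -1 < x) (hy : y < 1) (hxy : x ≤ y) :
    Real.tanh (k * artanh x) ≤ Real.tanh (k * artanh y) := by
  rw [artanh_eq_real_artanh ⟨hx.le, by linarith⟩, artanh_eq_real_artanh ⟨by linarith, hy.le⟩]
  exact Real.tanh_strictMono.monotone
    (mul_le_mul_of_nonneg_left (Real.artanh_le_artanh hx hy hxy) hk)

lemma tanh_mul_artanh_nonneg {k x : ℝ} (hk : 0 ≤ k) (hx : x ∈ Ico 0 1) :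
    0 ≤ Real.tanh (k * artanh x) := by
  simpa [artanh] using tanh_mul_artanh_le hk (by norm_num) hx.2 hx.1

lemma tanh_mul_artanh_lt_self {k x : ℝ} (hk : k < 1) (hx : x ∈ Ioo 0 1) :
    Real.tanh (k * artanh x) < x := by
  rw [artanh_eq_real_artanh ⟨by linarith [hx.1], hx.2.le⟩]
  calc Real.tanh (k * Real.artanh x) < Real.tanh (Real.artanh x) :=
        Real.tanh_strictMono (mul_lt_of_lt_one_left (Real.artanh_pos hx) hk)
    _ = x := Real.tanh_artanh ⟨by linarith [hx.1], hx.2⟩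

lemma exists_tanh_mul_artanh_eq {k s : ℝ} (hk : 0 < k) (hs : s ∈ Ioo 0 1) :
    ∃ S ∈ Ioo 0 1, Real.tanh (k * artanh S) = s := by
  have hS : Real.tanh (Real.artanh s / k) ∈ Ioo (-1) 1 :=
    ⟨Real.neg_one_lt_tanh _, Real.tanh_lt_one _⟩
  refine ⟨Real.tanh (Real.artanh s / k), ⟨?_, hS.2⟩, ?_⟩
  · rw [← Real.tanh_zero]
    exact Real.tanh_strictMono (div_pos (Real.artanh_pos hs) hk)
  · rw [artanh_eq_real_artanh (Ioo_subset_Icc_self hS), Real.artanh_tanh, mul_div_cancel₀ _ hk.ne',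
      Real.tanh_artanh ⟨by linarith [hs.1], hs.2⟩]

lemma exists_mem_Ioo_eq_mul_one_add_sq {m : ℝ} (hm : 0 < m) (hm' : 2 * m < 1) :
    ∃ s ∈ Ioo (0 : ℝ) 1, s = m * (1 + s ^ 2) := by
  have hcont : ContinuousOn (fun s : ℝ => s - m * (1 + s ^ 2)) (Icc 0 1) := by fun_prop
  obtain ⟨s, hs, hs0⟩ := intermediate_value_Ioo zero_le_one hcont (show (0 : ℝ) ∈ _ by
    constructor <;> norm_num <;> linarith)
  exact ⟨s, hs, by linarith [hs0]⟩

noncomputable def mobius (z w : ℂ) : ℂ := (w - z) / (1 - conj z * w)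

lemma hdist_eq_mobius (u v : ℂ) : hdist u v = 2 * artanh ‖mobius v u‖ := rfl

lemma norm_mobius_comm (z w : ℂ) : ‖mobius z w‖ = ‖mobius w z‖ := by
  rw [mobius, mobius, norm_div, norm_div, norm_sub_rev, ← Complex.norm_conj (1 - conj z * w)]
  simp only [map_sub, map_one, map_mul, Complex.conj_conj, mul_comm]

lemma one_sub_conj_mul_ne_zero {z w : ℂ} (hz : ‖z‖ < 1) (hw : ‖w‖ < 1) : 1 - conj z * w ≠ 0 := by
  rw [sub_ne_zero]
  intro h
  have : ‖conj z * w‖ < 1 := by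
    rw [norm_mul, Complex.norm_conj]
    exact mul_lt_one_of_nonneg_of_lt_one_left (norm_nonneg z) hz hw.le
  rw [← h, norm_one] at this
  exact this.false

lemma norm_mobius_mobius {z u v : ℂ} (hz : ‖z‖ < 1) (hu : ‖u‖ < 1) (hv : ‖v‖ < 1) :
    ‖mobius (mobius z v) (mobius z u)‖ = ‖mobius v u‖ := by
  have hA := one_sub_conj_mul_ne_zero hz hu
  have hB := one_sub_conj_mul_ne_zero hz hv
  have hB' : 1 - z * conj v ≠ 0 := by
    simpa [mul_comm] using (map_ne_zero conj).2 hB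
  have hc := one_sub_conj_mul_ne_zero hz hz
  have hvu := one_sub_conj_mul_ne_zero hv hu
  have hnum : mobius z u - mobius z v =
      (1 - conj z * z) * (u - v) / ((1 - conj z * u) * (1 - conj z * v)) := by
    rw [mobius, mobius, div_sub_div _ _ hA hB]
    congr 1; ring
  have hden : 1 - conj (mobius z v) * mobius z u =
      (1 - conj z * z) * (1 - conj v * u) / ((1 - z * conj v) * (1 - conj z * u)) := by
    simp only [mobius, map_div₀, map_sub, map_one, map_mul, Complex.conj_conj]
    rw [div_mul_div_comm, one_sub_div (mul_ne_zero hB' hA)]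
    congr 1; ring
  have hnorm : ‖1 - z * conj v‖ = ‖1 - conj z * v‖ := by
    rw [← Complex.norm_conj]; simp only [map_sub, map_one, map_mul, Complex.conj_conj]
  rw [mobius, hnum, hden, mobius, norm_div, norm_div, norm_div, norm_div, norm_mul, norm_mul,
    norm_mul, norm_mul, hnorm]
  have := norm_pos_iff.2 hc
  have := norm_pos_iff.2 hA
  have := norm_pos_iff.2 hB
  field_simp

lemma hdist_add_hdist_of_mobius_eq_neg {z u v : ℂ} (hz : ‖z‖ < 1) (hu : ‖u‖ < 1) (hv : ‖v‖ < 1)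
    (hmid : mobius z v = -mobius z u) : hdist u z + hdist z v = hdist u v := by
  set w := mobius z u
  have hw : ‖mobius v u‖ = 2 * ‖w‖ / (1 + ‖w‖ ^ 2) := by
    rw [← norm_mobius_mobius hz hu hv, hmid, mobius, map_neg, neg_mul, Complex.conj_mul',
      sub_neg_eq_add, sub_neg_eq_add, ← two_mul, norm_div, norm_mul, ← Complex.ofReal_pow,
      ← Complex.ofReal_one, ← Complex.ofReal_add, Complex.norm_real,
      Real.norm_of_nonneg (by positivity)]
    norm_num [w]
  rw [hdist_eq_mobius, hdist_eq_mobius, hdist_eq_mobius, norm_mobius_comm v z, hmid, norm_neg, hw,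
    ← two_mul_artanh]
  ring

lemma norm_smul_sub_sq_of_sq_norm_eq {E : Type*} [NormedAddCommGroup E] [InnerProductSpace ℝ E]
    {ω a : E} (hω : ‖ω‖ = 1) (horth : ‖a‖ ^ 2 = 1 + ‖ω - a‖ ^ 2) (S : ℝ) :
    ‖S • ω - a‖ ^ 2 = (1 - S) ^ 2 + ‖ω - a‖ ^ 2 := by
  have h := norm_sub_sq_real ω a
  rw [hω] at h
  rw [norm_sub_sq_real, norm_smul, real_inner_smul_left, Real.norm_eq_abs, mul_pow, sq_abs, hω]
  linear_combination (-S) * h + (1 - S) * horth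

lemma norm_ofReal_mul_of_norm_eq_one (s : ℝ) {ω : ℂ} (hω : ‖ω‖ = 1) : ‖(s : ℂ) * ω‖ = |s| := by
  rw [norm_mul, hω, mul_one, Complex.norm_real, Real.norm_eq_abs]

lemma hDil_ofReal_mul (k : ℝ) {S : ℝ} {ω : ℂ} (hS : 0 < S) (hω : ‖ω‖ = 1) :
    hDil k (S * ω) = Real.tanh (k * artanh S) * ω := by
  have hS' : (S : ℂ) ≠ 0 := by exact_mod_cast hS.ne'
  rw [hDil, norm_ofReal_mul_of_norm_eq_one S hω, abs_of_pos hS, Complex.real_smul,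
    Complex.ofReal_div]
  field_simp

lemma norm_hDil {k : ℝ} (hk : 0 ≤ k) {w : ℂ} (hw : ‖w‖ < 1) :
    ‖hDil k w‖ = Real.tanh (k * artanh ‖w‖) := by
  rcases eq_or_ne w 0 with rfl | hw0
  · simp [hDil, artanh]
  rw [hDil, norm_smul, Real.norm_of_nonneg
    (div_nonneg (tanh_mul_artanh_nonneg hk ⟨norm_nonneg w, hw⟩) (norm_nonneg w)),
    div_mul_cancel₀ _ (norm_ne_zero_iff.2 hw0)]

lemma ofReal_mul_mem_image_hDil {a ω : ℂ} {r k s : ℝ} (hk : 0 < k) (hω : ‖ω‖ = 1)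
    (hωa : ‖ω - a‖ = r) (horth : ‖a‖ ^ 2 = 1 + r ^ 2) (hs : s ∈ Ioo 0 1) :
    (s : ℂ) * ω ∈ hDil k '' {z : ℂ | ‖z‖ < 1 ∧ r ≤ ‖z - a‖} := by
  obtain ⟨S, hS, hSs⟩ := exists_tanh_mul_artanh_eq hk hs
  refine ⟨S * ω, ⟨?_, ?_⟩, by rw [hDil_ofReal_mul k hS.1 hω, hSs]⟩
  · rw [norm_ofReal_mul_of_norm_eq_one S hω, abs_of_pos hS.1]
    exact hS.2
  · have h := norm_smul_sub_sq_of_sq_norm_eq (a := a) hω (by rw [hωa]; exact horth) S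
    rw [hωa, Complex.real_smul] at h
    nlinarith [norm_nonneg ((S : ℂ) * ω - a), (norm_nonneg (ω - a)).trans_eq hωa]

lemma ofReal_mul_not_mem_image_hDil {e : ℂ} {α r k t : ℝ} (hk : 0 < k) (he : ‖e‖ = 1)
    (hα : 1 ≤ α) (hp : α - r ∈ Ico 0 1) (ht : Real.tanh (k * artanh (α - r)) < t) :
    (t : ℂ) * e ∉ hDil k '' {z : ℂ | ‖z‖ < 1 ∧ r ≤ ‖z - α * e‖} := by
  rintro ⟨w, ⟨hw1, hwr⟩, hwt⟩
  have ht0 : 0 < t := (tanh_mul_artanh_nonneg hk.le hp).trans_lt ht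
  have htw : Real.tanh (k * artanh ‖w‖) = t := by
    rw [← norm_hDil hk.le hw1, hwt, norm_ofReal_mul_of_norm_eq_one t he, abs_of_pos ht0]
  have hpw : α - r < ‖w‖ := by
    by_contra! h
    exact (htw ▸ ht).not_ge (tanh_mul_artanh_le hk.le (by linarith [norm_nonneg w]) hp.2 h)
  have hw0 : (‖w‖ : ℂ) ≠ 0 := by exact_mod_cast (hp.1.trans_lt hpw).ne'
  have hwe : w = ‖w‖ * e := by
    rw [hDil, htw, Complex.real_smul, Complex.ofReal_div] at hwt
    have ht0' : (t : ℂ) ≠ 0 := by exact_mod_cast ht0.ne'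
    calc w = (‖w‖ / t : ℂ) * ((t / ‖w‖ : ℂ) * w) := by field_simp
      _ = ‖w‖ * e := by rw [hwt]; field_simp
  have : ‖w - α * e‖ = α - ‖w‖ := by
    conv_lhs => rw [hwe, ← sub_mul, ← Complex.ofReal_sub]
    rw [norm_ofReal_mul_of_norm_eq_one _ he, abs_of_nonpos (by linarith)]
    ring
  linarith

/-- For `‖e‖ = 1` and `α ^ 2 = 1 + r ^ 2`, the circle `‖z - α e‖ = |r|` is orthogonal to the unit
circle and meets it at `geodesicEndpoint e α r` and `geodesicEndpoint e α (-r)`. -/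
noncomputable def geodesicEndpoint (e : ℂ) (α r : ℝ) : ℂ := e * ((1 + r * Complex.I) / α)

lemma norm_geodesicEndpoint {e : ℂ} {α r : ℝ} (he : ‖e‖ = 1) (hα : 0 < α)
    (horth : α ^ 2 = 1 + r ^ 2) : ‖geodesicEndpoint e α r‖ = 1 := by
  rw [geodesicEndpoint, norm_mul, he, one_mul, norm_div, Complex.norm_real,
    Real.norm_of_nonneg hα.le, ← Complex.ofReal_one, Complex.norm_add_mul_I, one_pow, ← horth,
    Real.sqrt_sq hα.le, div_self hα.ne']

lemma norm_geodesicEndpoint_sub {e : ℂ} {α r : ℝ} (he : ‖e‖ = 1) (hα : 0 < α)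
    (horth : α ^ 2 = 1 + r ^ 2) : ‖geodesicEndpoint e α r - α * e‖ = |r| := by
  have hα' : (α : ℂ) ≠ 0 := by exact_mod_cast hα.ne'
  have horth' : (α : ℂ) ^ 2 = 1 + r ^ 2 := by exact_mod_cast horth
  have : geodesicEndpoint e α r - α * e = r * Complex.I * geodesicEndpoint e α r := by
    rw [geodesicEndpoint]
    field_simp
    linear_combination (-e) * horth' - (r ^ 2 * e) * Complex.I_sq
  rw [this, norm_mul, norm_geodesicEndpoint he hα horth, norm_mul, Complex.norm_I,
    Complex.norm_real, Real.norm_eq_abs, mul_one, mul_one]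

lemma mobius_eq_neg_of_symmetric {e : ℂ} (he : ‖e‖ = 1) {x y t : ℝ} (htx : t * x ≠ 1)
    (h : x * (1 + t ^ 2) = t * (1 + x ^ 2 + y ^ 2)) :
    mobius (t * e) (e * (x - y * Complex.I)) = -mobius (t * e) (e * (x + y * Complex.I)) := by
  have hee : conj e * e = 1 := by rw [Complex.conj_mul', he]; norm_num
  have hden : ∀ y' : ℝ,
      1 - conj (t * e) * (e * (x + y' * Complex.I)) = 1 - t * x - t * y' * Complex.I := by
    intro y'
    rw [map_mul, Complex.conj_ofReal]
    linear_combination (-(t * (x + y' * Complex.I))) * hee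
  have hne : ∀ y' : ℝ, (1 : ℂ) - t * x - t * y' * Complex.I ≠ 0 := by
    intro y' h0
    have hre : ((1 : ℂ) - t * x - t * y' * Complex.I).re = 1 - t * x := by simp
    rw [h0, Complex.zero_re] at hre
    exact htx (by linarith)
  have hsub : (x : ℂ) - y * Complex.I = x + ((-y : ℝ) : ℂ) * Complex.I := by push_cast; ring
  rw [hsub, mobius, mobius, hden, hden, eq_neg_iff_add_eq_zero,
    div_add_div _ _ (hne _) (hne _), div_eq_zero_iff]
  left
  have h' : (x : ℂ) * (1 + t ^ 2) = t * (1 + x ^ 2 + y ^ 2) := by exact_mod_cast h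
  push_cast
  linear_combination (2 * e) * h' + (2 * t * y ^ 2 * e) * Complex.I_sq

lemma ofReal_mul_geodesicEndpoint_mem_image_hDil {e : ℂ} {α r k s : ℝ} (he : ‖e‖ = 1)
    (hα : 0 < α) (horth : α ^ 2 = 1 + r ^ 2) (hk : 0 < k) (hs : s ∈ Ioo 0 1) :
    (s : ℂ) * geodesicEndpoint e α r ∈ hDil k '' {z : ℂ | ‖z‖ < 1 ∧ |r| ≤ ‖z - α * e‖} := by
  refine ofReal_mul_mem_image_hDil hk (norm_geodesicEndpoint he hα horth)
    (norm_geodesicEndpoint_sub he hα horth) ?_ hs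
  rw [norm_ofReal_mul_of_norm_eq_one α he, sq_abs, sq_abs, horth]

lemma hdist_add_hdist_geodesicEndpoint {e : ℂ} {α r s t : ℝ} (he : ‖e‖ = 1) (hα : 1 ≤ α)
    (horth : α ^ 2 = 1 + r ^ 2) (hs : |s| < 1) (ht : |t| < 1)
    (hst : s * (1 + t ^ 2) = α * t * (1 + s ^ 2)) :
    hdist (s * geodesicEndpoint e α r) (t * e) + hdist (t * e) (s * geodesicEndpoint e α (-r)) =
      hdist (s * geodesicEndpoint e α r) (s * geodesicEndpoint e α (-r)) := by
  have hα0 : 0 < α := zero_lt_one.trans_le hα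
  have hsω : ∀ r' : ℝ, α ^ 2 = 1 + r' ^ 2 → ‖(s : ℂ) * geodesicEndpoint e α r'‖ < 1 :=
    fun r' h => by rwa [norm_ofReal_mul_of_norm_eq_one s (norm_geodesicEndpoint he hα0 h)]
  have hrel : s / α * (1 + t ^ 2) = t * (1 + (s / α) ^ 2 + (s * r / α) ^ 2) := by
    field_simp
    linear_combination α * hst + s ^ 2 * t * horth
  have htx : t * (s / α) ≠ 1 := by
    refine (lt_of_abs_lt ?_).ne
    rw [abs_mul, abs_div, abs_of_pos hα0]
    exact mul_lt_one_of_nonneg_of_lt_one_left (abs_nonneg t) ht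
      ((div_le_one hα0).2 (hs.le.trans hα))
  refine hdist_add_hdist_of_mobius_eq_neg (by rwa [norm_ofReal_mul_of_norm_eq_one t he])
    (hsω r horth) (hsω (-r) (by rwa [neg_sq])) ?_
  rw [show (s : ℂ) * geodesicEndpoint e α r = e * ((s / α : ℝ) + (s * r / α : ℝ) * Complex.I) by
      rw [geodesicEndpoint]; push_cast; ring,
    show (s : ℂ) * geodesicEndpoint e α (-r) = e * ((s / α : ℝ) - (s * r / α : ℝ) * Complex.I) by
      rw [geodesicEndpoint]; push_cast; ring]
  exact mobius_eq_neg_of_symmetric he htx hrel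

theorem stmt_18 (a : ℂ) (r : ℝ) (hr : 0 < r) (horth : ‖a‖ ^ 2 = 1 + r ^ 2)
    (k : ℝ) (hk : k ∈ Set.Ioo (0 : ℝ) 1) :
    ¬ hConvex (hDil k '' {z : ℂ | ‖z‖ < 1 ∧ r ≤ ‖z - a‖}) := by
  set α := ‖a‖
  have hα : 1 < α := by nlinarith [norm_nonneg a]
  have hp : α - r ∈ Ioo 0 1 := ⟨by nlinarith, by nlinarith⟩
  set e : ℂ := a / α
  have he : ‖e‖ = 1 := by simp [e, α, norm_pos_iff.1 (zero_lt_one.trans hα)]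
  have hae : a = α * e := (mul_div_cancel₀ a (by exact_mod_cast (zero_lt_one.trans hα).ne')).symm
  obtain ⟨t, ht₀, htp⟩ := exists_between (tanh_mul_artanh_lt_self hk.2 hp)
  have ht : t ∈ Ioo 0 1 :=
    ⟨(tanh_mul_artanh_nonneg hk.1.le (Ioo_subset_Ico_self hp)).trans_lt ht₀, htp.trans hp.2⟩
  obtain ⟨s, hs, hst⟩ := exists_mem_Ioo_eq_mul_one_add_sq (m := α * t / (1 + t ^ 2))
    (by have := ht.1; positivity)
    -- `α - r` is the smaller root of `T ^ 2 - 2 α T + 1`, hence `2 α t < 1 + t ^ 2`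
    (by rw [mul_div_assoc', div_lt_one (by positivity)]; nlinarith [hp.1, ht.1])
  have hu := ofReal_mul_geodesicEndpoint_mem_image_hDil he (zero_lt_one.trans hα) horth hk.1 hs
  have hv := ofReal_mul_geodesicEndpoint_mem_image_hDil he (zero_lt_one.trans hα) (r := -r)
    (by rwa [neg_sq]) hk.1 hs
  have hz := ofReal_mul_not_mem_image_hDil hk.1 he hα.le (Ioo_subset_Ico_self hp) ht₀
  rw [abs_of_pos hr, ← hae] at hu
  rw [abs_neg, abs_of_pos hr, ← hae] at hv
  rw [← hae] at hz
  refine fun hconv => hz (hconv _ hu _ hv _ ?_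
    (hdist_add_hdist_geodesicEndpoint he hα.le horth ?_ ?_ ?_))
  · rw [norm_ofReal_mul_of_norm_eq_one t he, abs_of_pos ht.1]; exact ht.2
  · rw [abs_of_pos hs.1]; exact hs.2
  · rw [abs_of_pos ht.1]; exact ht.2
  · field_simp at hst; linear_combination hst
end
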